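/- The short exact sequence 1 → A₆'/Z(𝒲₆') → 𝒲₆'/Z(𝒲₆') → S₆ → 1 is not split, where 𝒲₆' = ⟨W₆⁺, i·Id⟩ ∩ ker γ for W₆⁺ the determinant-1 signed permutation matrices in GL₆(ℂ) and γ the product of the nonzero entries. -/

import Mathlib

noncomputable section
open Matrix Complex

/-- The signed permutation matrix with underlying permutation `σ` and signs `a`. -/
def sp (σ : Equiv.Perm (Fin 6)) (a : Fin 6 → ℂ) : Matrix (Fin 6) (Fin 6) ℂ :=
  Matrix.of fun i j => if i = σ j then a j else 0

/-- All entries are `±1`. -/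
def signs (a : Fin 6 → ℂ) : Prop := ∀ k, a k = 1 ∨ a k = -1

/-- The Weyl group of type `B₆`: all signed permutation matrices. -/
def W6Set : Set (GL (Fin 6) ℂ) :=
  {g | ∃ σ a, signs a ∧ (g : Matrix (Fin 6) (Fin 6) ℂ) = sp σ a}

/-- `W₆⁺`: signed permutation matrices of determinant 1. -/
def W6plusSet : Set (GL (Fin 6) ℂ) :=
  {g | ∃ σ a, signs a ∧ (g : Matrix (Fin 6) (Fin 6) ℂ) = sp σ a ∧
    (g : Matrix (Fin 6) (Fin 6) ℂ).det = 1}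

/-- `W₆'` (type `D₆`): signed permutation matrices with product of entries 1. -/
def W6'Set : Set (GL (Fin 6) ℂ) :=
  {g | ∃ σ a, signs a ∧ (∏ k, a k) = 1 ∧ (g : Matrix (Fin 6) (Fin 6) ℂ) = sp σ a}

/-- `A₆'`: diagonal sign matrices with product of entries 1. -/
def A6'Set : Set (GL (Fin 6) ℂ) :=
  {g | ∃ a, signs a ∧ (∏ k, a k) = 1 ∧ (g : Matrix (Fin 6) (Fin 6) ℂ) = Matrix.diagonal a}

/-- `i · Id` as an element of `GL₆(ℂ)`. -/
def iId : GL (Fin 6) ℂ :=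
  ⟨Matrix.diagonal (fun _ => Complex.I), Matrix.diagonal (fun _ => -Complex.I),
    by simp [Matrix.diagonal_mul_diagonal, Complex.I_mul_I],
    by simp [Matrix.diagonal_mul_diagonal, Complex.I_mul_I]⟩

/-- For a monomial matrix, the product of its nonzero entries (γ). -/
def gam (m : Matrix (Fin 6) (Fin 6) ℂ) : ℂ := ∏ j, ∑ i, m i j

/-- `𝒲₆ = ⟨W₆⁺, i·Id⟩`. -/
def CW6Sub : Subgroup (GL (Fin 6) ℂ) := Subgroup.closure (W6plusSet ∪ {iId})

/-- `𝒲₆' = 𝒲₆ ∩ ker γ`. -/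
def CW6'Set : Set (GL (Fin 6) ℂ) :=
  {g | g ∈ CW6Sub ∧ gam (g : Matrix (Fin 6) (Fin 6) ℂ) = 1}

def CW6'Sub : Subgroup (GL (Fin 6) ℂ) := Subgroup.closure CW6'Set

def W6Sub : Subgroup (GL (Fin 6) ℂ) := Subgroup.closure W6Set
def W6plusSub : Subgroup (GL (Fin 6) ℂ) := Subgroup.closure W6plusSet
def W6'Sub : Subgroup (GL (Fin 6) ℂ) := Subgroup.closure W6'Set

/-! The nonzero entries of every element of `𝒲₆` square to its determinant, and elements of
`𝒲₆'` have `γ = 1`; commuting with the even permutation matrices forces `Z(𝒲₆')` to be scalar.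
Suppose `f` were a section multiplicative modulo `Z(𝒲₆')` and write `f (0 1) = sp (0 1) t`.
Its determinant is `sign (0 1) · γ = -1`, so `t k ^ 2 = -1` for all `k`. Since `(0 1)` is an
involution, `f (0 1) ^ 2` is scalar, so `t 0 t 1 = t 3 ^ 2 = -1`; since `(0 1)` commutes with
`(2 3)` and `(4 5)`, `f (0 1)` commutes with their lifts up to a scalar, which a common fixed point
shows to be `1`, so `t 2 = t 3` and `t 4 = t 5`. Then `γ (f (0 1)) = (t 0 t 1) t 3 ^ 2 t 5 ^ 2 = -1`,
a contradiction. -/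

open Equiv Equiv.Perm

theorem Equiv.Perm.eq_one_of_mem_centralizer_alternatingGroup {α : Type*} [Fintype α]
    [DecidableEq α] (hα : 4 ≤ Fintype.card α) {ρ : Perm α}
    (hρ : ρ ∈ Subgroup.centralizer (alternatingGroup α)) : ρ = 1 := by
  ext a
  by_contra hab
  rw [Perm.one_apply] at hab
  set b := ρ a
  have hcard : 1 < ({a, b} : Finset α)ᶜ.card := by
    rw [Finset.card_compl, Finset.card_pair (Ne.symm hab)]
    omega
  obtain ⟨c, hc, d, hd, hcd⟩ := Finset.one_lt_card.1 hcard
  simp only [Finset.mem_compl, Finset.mem_insert, Finset.mem_singleton, not_or] at hc hd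
  have hσ : swap b c * swap c d ∈ alternatingGroup α := by
    simp [mem_alternatingGroup, sign_swap (Ne.symm hc.2), sign_swap hcd]
  have h := DFunLike.congr_fun (Subgroup.mem_centralizer_iff.1 hρ _ hσ) a
  rw [Perm.mul_apply, Perm.mul_apply, Perm.mul_apply, Perm.mul_apply,
    swap_apply_of_ne_of_ne (Ne.symm hc.1) (Ne.symm hd.1),
    swap_apply_of_ne_of_ne (Ne.symm hab) (Ne.symm hc.1),
    swap_apply_of_ne_of_ne (Ne.symm hc.2) (Ne.symm hd.2), swap_apply_left] at h
  exact hc.2 h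

section LiftModulo

variable {M G : Type*} [Monoid M] [Group G] {Z : Subgroup G} {f : M → G}

theorem map_one_mem_of_inv_mul_mem (hf : ∀ σ τ, (f (σ * τ))⁻¹ * (f σ * f τ) ∈ Z) : f 1 ∈ Z := by
  simpa using hf 1 1

theorem mul_self_mem_of_inv_mul_mem (hf : ∀ σ τ, (f (σ * τ))⁻¹ * (f σ * f τ) ∈ Z) {σ : M}
    (hσ : σ * σ = 1) : f σ * f σ ∈ Z := by
  have h := Z.mul_mem (map_one_mem_of_inv_mul_mem hf) (hf σ σ)
  rwa [hσ, mul_inv_cancel_left] at h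

theorem inv_mul_mem_of_commute (hf : ∀ σ τ, (f (σ * τ))⁻¹ * (f σ * f τ) ∈ Z) {σ ρ : M}
    (h : Commute σ ρ) : (f ρ * f σ)⁻¹ * (f σ * f ρ) ∈ Z := by
  have hmem := Z.mul_mem (Z.inv_mem (hf ρ σ)) (hf σ ρ)
  rw [h.eq] at hmem
  convert hmem using 1
  group

end LiftModulo

section SignedPermMatrix

variable {σ τ : Perm (Fin 6)} {a b : Fin 6 → ℂ}

theorem sp_mul_sp : sp σ a * sp τ b = sp (σ * τ) (fun j => a (τ j) * b j) := by
  ext i j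
  rw [Matrix.mul_apply, Finset.sum_eq_single (τ j)]
  · by_cases h : i = σ (τ j) <;> simp [sp, h]
  · intro k _ hk
    simp [sp, hk]
  · simp

theorem sp_inj (h : sp σ a = sp τ b) (hb : ∀ j, b j ≠ 0) : σ = τ ∧ a = b := by
  have hentry (j : Fin 6) : (if τ j = σ j then a j else 0) = b j := by
    simpa [sp] using congrFun (congrFun h (τ j)) j
  have hperm (j : Fin 6) : τ j = σ j := by
    by_contra hne
    have h0 := hentry j
    rw [if_neg hne] at h0
    exact hb j h0.symm
  refine ⟨Equiv.ext fun j => (hperm j).symm, funext fun j => ?_⟩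
  simpa [hperm j] using hentry j

theorem sp_one_one : sp 1 1 = 1 := by
  ext i j
  by_cases h : i = j <;> simp [sp, Matrix.one_apply, h]

theorem sp_one_const (c : ℂ) : sp 1 (fun _ => c) = Matrix.diagonal fun _ => c := by
  ext i j
  by_cases h : i = j <;> simp [sp, h]

theorem det_sp : (sp σ a).det = sign σ * ∏ j, a j := by
  have h : sp σ a = σ⁻¹.permMatrix ℂ * Matrix.diagonal a := by
    ext i j
    simp [sp, Matrix.mul_diagonal, Equiv.Perm.permMatrix, PEquiv.toMatrix,
      Equiv.symm_apply_eq]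
  simp [h, Matrix.det_permutation]

theorem gam_sp : gam (sp σ a) = ∏ j, a j := by
  refine Finset.prod_congr rfl fun j _ => ?_
  rw [Finset.sum_eq_single (σ j)] <;> simp +contextual [sp]

theorem gam_one : gam 1 = 1 := by
  simpa [sp_one_one] using gam_sp (σ := 1) (a := 1)

theorem ne_zero_of_sq_eq_det {g : GL (Fin 6) ℂ} {x : ℂ}
    (hx : x ^ 2 = (g : Matrix (Fin 6) (Fin 6) ℂ).det) : x ≠ 0 := fun h0 =>
  g.det_ne_zero (by rw [← hx, h0, zero_pow two_ne_zero])

theorem coe_inv_eq_sp {g : GL (Fin 6) ℂ} (hg : (g : Matrix (Fin 6) (Fin 6) ℂ) = sp σ a)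
    (ha : ∀ j, a j ≠ 0) :
    ((g⁻¹ : GL (Fin 6) ℂ) : Matrix (Fin 6) (Fin 6) ℂ) = sp σ⁻¹ fun j => (a (σ⁻¹ j))⁻¹ := by
  refine Units.inv_eq_of_mul_eq_one_right ?_
  rw [hg, sp_mul_sp, mul_inv_cancel, ← sp_one_one]
  congr 1
  funext j
  exact mul_inv_cancel₀ (ha _)

end SignedPermMatrix

def sqrtDetMonomial : Subgroup (GL (Fin 6) ℂ) where
  carrier := {g | ∃ σ a, (g : Matrix (Fin 6) (Fin 6) ℂ) = sp σ a ∧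
    ∀ k, a k ^ 2 = (g : Matrix (Fin 6) (Fin 6) ℂ).det}
  mul_mem' := by
    rintro g h ⟨σ, a, hg, ha⟩ ⟨τ, b, hh, hb⟩
    refine ⟨σ * τ, fun j => a (τ j) * b j, by rw [Units.val_mul, hg, hh, sp_mul_sp], fun k => ?_⟩
    rw [Units.val_mul, Matrix.det_mul, mul_pow, ha, hb]
  one_mem' := ⟨1, 1, sp_one_one.symm, by simp⟩
  inv_mem' := by
    rintro g ⟨σ, a, hg, ha⟩
    refine ⟨σ⁻¹, _, coe_inv_eq_sp hg fun j => ne_zero_of_sq_eq_det (ha j), fun k => ?_⟩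
    rw [inv_pow, ha, Matrix.coe_units_inv, Matrix.det_nonsing_inv, Ring.inverse_eq_inv']

section SqrtDetMonomial

variable {g h : GL (Fin 6) ℂ} {σ : Perm (Fin 6)} {a : Fin 6 → ℂ}

theorem sq_eq_det_of_mem_sqrtDetMonomial (hg : g ∈ sqrtDetMonomial)
    (h : (g : Matrix (Fin 6) (Fin 6) ℂ) = sp σ a) (k : Fin 6) :
    a k ^ 2 = (g : Matrix (Fin 6) (Fin 6) ℂ).det := by
  obtain ⟨ρ, b, hb, hsq⟩ := hg
  rw [(sp_inj (h.symm.trans hb) fun j => ne_zero_of_sq_eq_det (hsq j)).2, hsq]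

theorem ne_zero_of_mem_sqrtDetMonomial (hg : g ∈ sqrtDetMonomial)
    (h : (g : Matrix (Fin 6) (Fin 6) ℂ) = sp σ a) (k : Fin 6) : a k ≠ 0 :=
  ne_zero_of_sq_eq_det (sq_eq_det_of_mem_sqrtDetMonomial hg h k)

theorem gam_mul_of_mem_sqrtDetMonomial (hg : g ∈ sqrtDetMonomial) (hh : h ∈ sqrtDetMonomial) :
    gam ((g * h : GL (Fin 6) ℂ) : Matrix (Fin 6) (Fin 6) ℂ) =
      gam (g : Matrix (Fin 6) (Fin 6) ℂ) * gam (h : Matrix (Fin 6) (Fin 6) ℂ) := by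
  obtain ⟨σ, a, hga, -⟩ := hg
  obtain ⟨τ, b, hhb, -⟩ := hh
  rw [Units.val_mul, hga, hhb, sp_mul_sp, gam_sp, gam_sp, gam_sp, Finset.prod_mul_distrib,
    Equiv.prod_comp]

end SqrtDetMonomial

theorem CW6Sub_le_sqrtDetMonomial : CW6Sub ≤ sqrtDetMonomial := by
  refine Subgroup.closure_le _ |>.2 (Set.union_subset ?_ ?_)
  · rintro g ⟨σ, a, ha, hg, hdet⟩
    refine ⟨σ, a, hg, fun k => ?_⟩
    rcases ha k with h | h <;> simp [h, hdet]
  · rintro g rfl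
    refine ⟨1, fun _ => Complex.I, (sp_one_const _).symm, fun k => ?_⟩
    change _ = (Matrix.diagonal fun _ => Complex.I).det
    rw [Matrix.det_diagonal, Finset.prod_const, Finset.card_univ, Fintype.card_fin]
    norm_num [pow_succ]

theorem mem_sqrtDetMonomial_and_gam_eq_one_of_mem_CW6'Sub {g : GL (Fin 6) ℂ}
    (hg : g ∈ CW6'Sub) :
    g ∈ sqrtDetMonomial ∧ gam (g : Matrix (Fin 6) (Fin 6) ℂ) = 1 := by
  induction hg using Subgroup.closure_induction with
  | mem x hx => exact ⟨CW6Sub_le_sqrtDetMonomial hx.1, hx.2⟩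
  | one => exact ⟨one_mem _, gam_one⟩
  | mul x y _ _ hx hy =>
    exact ⟨mul_mem hx.1 hy.1, by rw [gam_mul_of_mem_sqrtDetMonomial hx.1 hy.1, hx.2, hy.2, one_mul]⟩
  | inv x _ hx =>
    refine ⟨inv_mem hx.1, ?_⟩
    have h := gam_mul_of_mem_sqrtDetMonomial (inv_mem hx.1) hx.1
    rwa [inv_mul_cancel, Units.val_one, gam_one, hx.2, mul_one, eq_comm] at h

def permGL (σ : Perm (Fin 6)) : GL (Fin 6) ℂ :=
  ⟨sp σ 1, sp σ⁻¹ 1, by rw [sp_mul_sp, mul_inv_cancel, ← sp_one_one]; simp [Pi.one_def],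
    by rw [sp_mul_sp, inv_mul_cancel, ← sp_one_one]; simp [Pi.one_def]⟩

theorem coe_permGL (σ : Perm (Fin 6)) :
    (permGL σ : Matrix (Fin 6) (Fin 6) ℂ) = sp σ 1 := rfl

theorem permGL_mem_CW6'Sub {σ : Perm (Fin 6)} (hσ : σ ∈ alternatingGroup (Fin 6)) :
    permGL σ ∈ CW6'Sub := by
  refine Subgroup.subset_closure ⟨Subgroup.subset_closure (Or.inl ⟨σ, 1, fun _ => Or.inl rfl,
    coe_permGL σ, ?_⟩), ?_⟩
  · rw [coe_permGL, det_sp, mem_alternatingGroup.1 hσ]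
    simp
  · rw [coe_permGL, gam_sp]
    simp

theorem exists_coe_eq_sp_const_of_mem_center {z : GL (Fin 6) ℂ}
    (hz : z ∈ CW6'Sub ⊓ Subgroup.centralizer CW6'Sub) :
    ∃ ε, (z : Matrix (Fin 6) (Fin 6) ℂ) = sp 1 fun _ => ε := by
  obtain ⟨hz, hcent⟩ := hz
  obtain ⟨⟨ρ, c, hzc, hsq⟩, -⟩ := mem_sqrtDetMonomial_and_gam_eq_one_of_mem_CW6'Sub hz
  have hcomm (σ : Perm (Fin 6)) (hσ : σ ∈ alternatingGroup (Fin 6)) :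
      σ * ρ = ρ * σ ∧ ∀ j, c (σ j) = c j := by
    have h := congrArg Units.val
      (Subgroup.mem_centralizer_iff.1 hcent _ (permGL_mem_CW6'Sub hσ))
    rw [Units.val_mul, Units.val_mul, hzc, coe_permGL, sp_mul_sp, sp_mul_sp] at h
    obtain ⟨hperm, hfun⟩ := sp_inj h fun j => by
      simpa using ne_zero_of_sq_eq_det (hsq (σ j))
    exact ⟨hperm, fun j => by simpa using (congrFun hfun j).symm⟩
  have hρ : ρ = 1 := Equiv.Perm.eq_one_of_mem_centralizer_alternatingGroup (by simp)
    (Subgroup.mem_centralizer_iff.2 fun σ hσ => (hcomm σ hσ).1)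
  have := alternatingGroup.isPretransitive_of_three_le_card (Fin 6) (by simp)
  refine ⟨c 0, ?_⟩
  rw [hzc, hρ]
  congr 1
  funext j
  obtain ⟨σ, rfl⟩ := MulAction.exists_smul_eq (alternatingGroup (Fin 6)) 0 j
  exact (hcomm σ σ.2).2 0

section LiftModuloCenter

variable {f : Perm (Fin 6) → GL (Fin 6) ℂ} {t : Perm (Fin 6) → Fin 6 → ℂ}

theorem apply_mul_apply_eq_of_mul_self_eq_one (hmem : ∀ σ, f σ ∈ CW6'Sub)
    (ht : ∀ σ, (f σ : Matrix (Fin 6) (Fin 6) ℂ) = sp σ (t σ))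
    (hf : ∀ σ τ, (f (σ * τ))⁻¹ * (f σ * f τ) ∈ CW6'Sub ⊓ Subgroup.centralizer CW6'Sub)
    {σ : Perm (Fin 6)} (hσ : σ * σ = 1) (j k : Fin 6) :
    t σ (σ j) * t σ j = t σ (σ k) * t σ k := by
  obtain ⟨ε, hε⟩ := exists_coe_eq_sp_const_of_mem_center (mul_self_mem_of_inv_mul_mem hf hσ)
  rw [Units.val_mul, ht, sp_mul_sp] at hε
  have hne := ne_zero_of_mem_sqrtDetMonomial
    (mem_sqrtDetMonomial_and_gam_eq_one_of_mem_CW6'Sub (hmem σ)).1 (ht σ)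
  obtain ⟨-, hfun⟩ := sp_inj hε.symm fun i => mul_ne_zero (hne _) (hne i)
  rw [← congrFun hfun j, ← congrFun hfun k]

theorem apply_eq_apply_of_commute (hmem : ∀ σ, f σ ∈ CW6'Sub)
    (ht : ∀ σ, (f σ : Matrix (Fin 6) (Fin 6) ℂ) = sp σ (t σ))
    (hf : ∀ σ τ, (f (σ * τ))⁻¹ * (f σ * f τ) ∈ CW6'Sub ⊓ Subgroup.centralizer CW6'Sub)
    {σ ρ : Perm (Fin 6)} (hcomm : Commute σ ρ) {a b : Fin 6} (hσa : σ a = a) (hρa : ρ a = a)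
    (hσb : σ b = b) : t σ (ρ b) = t σ b := by
  obtain ⟨δ, hδ⟩ := exists_coe_eq_sp_const_of_mem_center (inv_mul_mem_of_commute hf hcomm)
  have h : f σ * f ρ = f ρ * f σ * ((f ρ * f σ)⁻¹ * (f σ * f ρ)) := by group
  have hsp := congrArg Units.val h
  rw [Units.val_mul, Units.val_mul, Units.val_mul, hδ, ht, ht, sp_mul_sp, sp_mul_sp,
    sp_mul_sp] at hsp
  have hne (τ : Perm (Fin 6)) := ne_zero_of_mem_sqrtDetMonomial
    (mem_sqrtDetMonomial_and_gam_eq_one_of_mem_CW6'Sub (hmem τ)).1 (ht τ)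
  obtain ⟨-, hfun⟩ := sp_inj hsp.symm fun i => mul_ne_zero (hne σ _) (hne ρ i)
  have hδ1 : δ = 1 := by
    have h := congrFun hfun a
    simp only [Perm.one_apply, hσa, hρa] at h
    exact mul_left_cancel₀ (mul_ne_zero (hne ρ a) (hne σ a)) (by rw [h, mul_one, mul_comm])
  have h := congrFun hfun b
  simp only [Perm.one_apply, hσb, hδ1, mul_one] at h
  exact mul_right_cancel₀ (hne ρ b) (by rw [← h, mul_comm])

end LiftModuloCenter

/-- Non-splitness, encoded as: no set-theoretic section `f` of `π` with values in `𝒲₆'` is a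
group morphism modulo the center `Z(𝒲₆')`. -/
theorem stmt_9 :
    ¬ ∃ f : Equiv.Perm (Fin 6) → GL (Fin 6) ℂ,
      (∀ σ : Equiv.Perm (Fin 6), f σ ∈ CW6'Sub ∧
        ∃ t : Fin 6 → ℂ, ((f σ) : Matrix (Fin 6) (Fin 6) ℂ) = sp σ t) ∧
      (∀ σ τ : Equiv.Perm (Fin 6),
        (f (σ * τ))⁻¹ * (f σ * f τ) ∈
          {z : GL (Fin 6) ℂ | z ∈ CW6'Sub ∧ ∀ h ∈ CW6'Sub, z * h = h * z}) := by
  rintro ⟨f, hlift, hZ⟩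
  choose hmem t ht using hlift
  have hf (σ τ : Perm (Fin 6)) :
      (f (σ * τ))⁻¹ * (f σ * f τ) ∈ CW6'Sub ⊓ Subgroup.centralizer CW6'Sub :=
    ⟨(hZ σ τ).1, Subgroup.mem_centralizer_iff.2 fun h hh => ((hZ σ τ).2 h hh).symm⟩
  set τ : Perm (Fin 6) := swap 0 1
  obtain ⟨hS, hgam⟩ := mem_sqrtDetMonomial_and_gam_eq_one_of_mem_CW6'Sub (hmem τ)
  have hprod : ∏ k, t τ k = 1 := by rwa [ht, gam_sp] at hgam
  have hsq (k : Fin 6) : t τ k ^ 2 = -1 := by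
    rw [sq_eq_det_of_mem_sqrtDetMonomial hS (ht τ), ht, det_sp, hprod, sign_swap (by decide)]
    simp
  have h01 : t τ 1 * t τ 0 = t τ 3 * t τ 3 :=
    apply_mul_apply_eq_of_mul_self_eq_one hmem ht hf (swap_mul_self 0 1) 0 3
  have h23 : t τ 3 = t τ 2 :=
    apply_eq_apply_of_commute hmem ht hf (ρ := swap 2 3) (a := 4) (b := 2)
      (show _ * _ = _ * _ by decide) (by decide) (by decide) (by decide)
  have h45 : t τ 5 = t τ 4 :=
    apply_eq_apply_of_commute hmem ht hf (ρ := swap 4 5) (a := 2) (b := 4)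
      (show _ * _ = _ * _ by decide) (by decide) (by decide) (by decide)
  have h : t τ 1 * t τ 0 * t τ 3 ^ 2 * t τ 5 ^ 2 = 1 := by
    rw [← hprod, Fin.prod_univ_six, ← h23, ← h45]
    ring
  rw [h01, ← sq, hsq, hsq] at h
  norm_num at h
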